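/- arXiv:1009.1014 — 9 statements merged into one kernel-verified Lean document; each statement's English description precedes it below -/
import Mathlib

section
/- Let p_1 < p_2 < ⋯ be an infinite sequence of primes, and for each positive integer k define S_k = {n ∈ ℕ : Ω(n) = k, p_k ∣ n, gcd(p_1⋯p_{k-1}, n) = 1}. Then the set S = ⋃_{k≥1} S_k is primitive: no element of S divides another distinct element of S. -/
/-! An element of `S_k` has exactly `k` prime factors, so a proper multiple `b ∈ S_l` of
`a ∈ S_k` has `l > k`. But `p_k ∣ a ∣ b`, while `b ∈ S_l` is coprime to `p_1 ⋯ p_{l-1}`,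
which contains the factor `p_k`. -/

def Primitive (S : Set ℕ) : Prop := ∀ a ∈ S, ∀ b ∈ S, a ≠ b → ¬ a ∣ b

open ArithmeticFunction.Omega

theorem ArithmeticFunction.cardFactors_lt_of_dvd_of_ne {a b : ℕ} (hb : b ≠ 0) (hab : a ∣ b)
    (hne : a ≠ b) : Ω a < Ω b := by
  obtain ⟨c, rfl⟩ := hab
  have ha : a ≠ 0 := left_ne_zero_of_mul hb
  have hc : 1 < c := by
    rcases Nat.lt_or_ge 1 c with h | h
    · exact h
    · interval_cases c <;> simp_all
  rw [cardFactors_mul ha (by omega)]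
  have := cardFactors_pos_iff_one_lt.mpr hc
  omega

theorem not_dvd_of_dvd_of_coprime_prod {p : ℕ → ℕ} {k l a b : ℕ} (hk : 1 ≤ k) (hkl : k < l)
    (hpk : (p k).Prime) (ha : p k ∣ a) (hb : Nat.Coprime (∏ j ∈ Finset.Icc 1 (l - 1), p j) b) :
    ¬ a ∣ b := by
  intro hab
  have hpk_prod : p k ∣ ∏ j ∈ Finset.Icc 1 (l - 1), p j :=
    Finset.dvd_prod_of_mem p (Finset.mem_Icc.mpr ⟨hk, by omega⟩)
  exact hpk.one_lt.ne' (Nat.eq_one_of_dvd_coprimes hb hpk_prod (ha.trans hab))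

theorem stmt_1_general (p : ℕ → ℕ) (hp : ∀ k, 1 ≤ k → (p k).Prime)
    (S : ℕ → Set ℕ)
    (hS : ∀ k, 1 ≤ k → S k = {n : ℕ | 0 < n ∧ n.primeFactorsList.length = k ∧ p k ∣ n ∧
      Nat.Coprime (∏ j ∈ Finset.Icc 1 (k - 1), p j) n}) :
    Primitive (⋃ k ∈ {k : ℕ | 1 ≤ k}, S k) := by
  intro a ha b hb hne hab
  simp only [Set.mem_iUnion, Set.mem_ofPred_eq] at ha hb
  obtain ⟨k, hk, hak⟩ := ha
  obtain ⟨l, hl, hbl⟩ := hb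
  rw [hS k hk] at hak
  rw [hS l hl] at hbl
  obtain ⟨-, rfl, hpk, -⟩ := hak
  obtain ⟨hb0, rfl, -, hcop⟩ := hbl
  have hkl := ArithmeticFunction.cardFactors_lt_of_dvd_of_ne hb0.ne' hab hne
  exact not_dvd_of_dvd_of_coprime_prod hk hkl (hp _ hk) hpk hcop hab

theorem stmt_1 (p : ℕ → ℕ) (hp : ∀ k, 1 ≤ k → (p k).Prime) (hmono : StrictMono p)
    (S : ℕ → Set ℕ)
    (hS : ∀ k, 1 ≤ k → S k = {n : ℕ | 0 < n ∧ n.primeFactorsList.length = k ∧ p k ∣ n ∧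
      Nat.Coprime (∏ j ∈ Finset.Icc 1 (k - 1), p j) n}) :
    Primitive (⋃ k ∈ {k : ℕ | 1 ≤ k}, S k) :=
  stmt_1_general p hp S hS
end

section
/- If j < k are positive integers, m ∈ S_j, and n ∈ S_k (with S_j, S_k as defined from a strictly increasing prime sequence p_1 < p_2 < ⋯), then m does not divide n. -/
theorem Nat.not_dvd_of_dvd_of_coprime {a b m n : ℕ} (ha : a ≠ 1) (ham : a ∣ m) (hab : a ∣ b)
    (hbn : Nat.Coprime b n) : ¬ m ∣ n := fun hmn =>
  ha <| (hbn.coprime_dvd_left hab).eq_one_of_dvd (ham.trans hmn)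

theorem stmt_2_general (p : ℕ → ℕ) (hp : ∀ k, 1 ≤ k → (p k).Prime)
    (S : ℕ → Set ℕ)
    (hS : ∀ k, 1 ≤ k → S k = {n : ℕ | 0 < n ∧ n.primeFactorsList.length = k ∧ p k ∣ n ∧
      Nat.Coprime (∏ i ∈ Finset.Icc 1 (k - 1), p i) n})
    (j k : ℕ) (hj : 1 ≤ j) (hjk : j < k) (m n : ℕ) (hm : m ∈ S j) (hn : n ∈ S k) :
    ¬ m ∣ n := by
  rw [hS j hj] at hm
  rw [hS k (hj.trans hjk.le)] at hn
  have hj_mem : j ∈ Finset.Icc 1 (k - 1) := Finset.mem_Icc.2 ⟨hj, Nat.le_sub_one_of_lt hjk⟩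
  exact Nat.not_dvd_of_dvd_of_coprime (hp j hj).ne_one hm.2.2.1
    (Finset.dvd_prod_of_mem p hj_mem) hn.2.2.2

theorem stmt_2 (p : ℕ → ℕ) (hp : ∀ k, 1 ≤ k → (p k).Prime) (hmono : StrictMono p)
    (S : ℕ → Set ℕ)
    (hS : ∀ k, 1 ≤ k → S k = {n : ℕ | 0 < n ∧ n.primeFactorsList.length = k ∧ p k ∣ n ∧
      Nat.Coprime (∏ i ∈ Finset.Icc 1 (k - 1), p i) n})
    (j k : ℕ) (hj : 1 ≤ j) (hjk : j < k) (m n : ℕ) (hm : m ∈ S j) (hn : n ∈ S k) :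
    ¬ m ∣ n :=
  stmt_2_general p hp S hS j k hj hjk m n hm hn
end

section
/- Let S be a set of integers greater than 1 such that ∑_{n ∈ S} 1/(n log n) converges. Then ∫_2^∞ S(t)/(t² log t) dt converges, where S(t) = #{n ∈ S : n ≤ t}. -/
/-! Writing `S(t) = ∑_{n ∈ S} 𝟙[n ≤ t]` and exchanging sum and integral (Tonelli),
`∫_2^∞ S(t) / (t² log t) dt = ∑_{n ∈ S} ∫_n^∞ dt / (t² log t)`, and each summand is at most
`(log n)⁻¹ ∫_n^∞ t⁻² dt = 1 / (n log n)`. -/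

open MeasureTheory Set
open scoped ENNReal

theorem lintegral_encard_mul_eq_tsum_setLIntegral {α ι : Type*} [MeasurableSpace α] [Countable ι]
    (μ : Measure α) {A : ι → Set α} (hA : ∀ i, MeasurableSet (A i)) {g : α → ℝ≥0∞}
    (hg : Measurable g) :
    ∫⁻ x, {i | x ∈ A i}.encard * g x ∂μ = ∑' i, ∫⁻ x in A i, g x ∂μ := by
  have hpoint : ∀ x, {i | x ∈ A i}.encard * g x = ∑' i, (A i).indicator g x := fun x => by
    rw [← ENNReal.tsum_set_const, tsum_subtype {i | x ∈ A i} fun _ => g x]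
    rfl
  simp_rw [hpoint, ← lintegral_indicator (hA _)]
  exact lintegral_tsum fun i => (hg.indicator (hA i)).aemeasurable

theorem Set.Finite.ofReal_ncard_div {β : Type*} {s : Set β} (hs : s.Finite) (d : ℝ) :
    ENNReal.ofReal (s.ncard / d) = s.encard * ENNReal.ofReal (1 / d) := by
  rw [div_eq_mul_one_div, ENNReal.ofReal_mul (Nat.cast_nonneg _), ENNReal.ofReal_natCast,
    ← hs.cast_ncard_eq]
  rfl

theorem finite_setOf_mem_and_natCast_le {α : Type*} [Semiring α] [PartialOrder α]
    [FloorSemiring α] (S : Set ℕ) (t : α) : {n ∈ S | (n : α) ≤ t}.Finite :=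
  (finite_Iic ⌊t⌋₊).subset fun _ hn => Nat.le_floor hn.2

theorem monotone_ncard_setOf_mem_and_natCast_le {α : Type*} [Semiring α] [PartialOrder α]
    [FloorSemiring α] (S : Set ℕ) : Monotone fun t : α => {n ∈ S | (n : α) ≤ t}.ncard :=
  fun _ t hst => ncard_le_ncard (fun _ hn => ⟨hn.1, hn.2.trans hst⟩)
    (finite_setOf_mem_and_natCast_le S t)

theorem lintegral_encard_setOf_mem_and_natCast_le_mul (μ : Measure ℝ) (S : Set ℕ)
    {g : ℝ → ℝ≥0∞} (hg : Measurable g) :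
    ∫⁻ t, {n ∈ S | (n : ℝ) ≤ t}.encard * g t ∂μ = ∑' n : S, ∫⁻ t in Ici (n : ℝ), g t ∂μ := by
  have hcount : ∀ t : ℝ, {n ∈ S | (n : ℝ) ≤ t}.encard = {n : S | t ∈ Ici (n : ℝ)}.encard :=
    fun t => by
      rw [← Subtype.val_injective.encard_image]
      congr 1
      ext
      simp [and_comm]
  simp_rw [hcount]
  exact lintegral_encard_mul_eq_tsum_setLIntegral μ (fun _ => measurableSet_Ici) hg

theorem lintegral_Ici_one_div_sq_mul_log_le {a : ℝ} (ha : 1 < a) :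
    ∫⁻ t in Ici a, ENNReal.ofReal (1 / (t ^ 2 * Real.log t))
      ≤ ENNReal.ofReal (1 / (a * Real.log a)) := by
  have ha0 : 0 < a := by linarith
  have hloga : 0 < Real.log a := Real.log_pos ha
  have hpow : ∫⁻ t in Ioi a, ENNReal.ofReal (t ^ (-2 : ℝ)) = ENNReal.ofReal a⁻¹ := by
    rw [← ofReal_integral_eq_lintegral_ofReal (integrableOn_Ioi_rpow_of_lt (by norm_num) ha0)
      ((ae_restrict_iff' measurableSet_Ioi).2 (ae_of_all _ fun t (ht : a < t) =>
        Real.rpow_nonneg (ha0.trans ht).le _)),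
      integral_Ioi_rpow_of_lt (by norm_num) ha0]
    norm_num [Real.rpow_neg_one]
  calc ∫⁻ t in Ici a, ENNReal.ofReal (1 / (t ^ 2 * Real.log t))
      ≤ ∫⁻ t in Ioi a, ENNReal.ofReal (Real.log a)⁻¹ * ENNReal.ofReal (t ^ (-2 : ℝ)) := by
        rw [← restrict_Ioi_eq_restrict_Ici]
        refine setLIntegral_mono' measurableSet_Ioi fun t (ht : a < t) => ?_
        have ht0 : 0 < t := ha0.trans ht
        rw [← ENNReal.ofReal_mul (by positivity), Real.rpow_neg ht0.le, Real.rpow_ofNat,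
          ← mul_inv, one_div, mul_comm (Real.log a)]
        gcongr
    _ = ENNReal.ofReal (1 / (a * Real.log a)) := by
        rw [lintegral_const_mul' _ _ ENNReal.ofReal_ne_top, hpow,
          ← ENNReal.ofReal_mul (by positivity), one_div, mul_inv, mul_comm]

theorem stmt_8 (S : Set ℕ) (hS : ∀ n ∈ S, 1 < n)
    (hsum : Summable (fun n : S => 1 / ((n : ℝ) * Real.log (n : ℕ)))) :
    IntegrableOn (fun t : ℝ =>
      ({n ∈ S | (n : ℝ) ≤ t}.ncard : ℝ) / (t ^ 2 * Real.log t)) (Set.Ici 2) := by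
  refine ⟨((Nat.mono_cast.comp (monotone_ncard_setOf_mem_and_natCast_le S)).measurable.div
    (by fun_prop)).aestronglyMeasurable, ?_⟩
  rw [hasFiniteIntegral_iff_ofReal ((ae_restrict_iff' measurableSet_Ici).2 (ae_of_all _
    fun t (ht : 2 ≤ t) => by
      have := Real.log_nonneg (by linarith : 1 ≤ t)
      positivity))]
  calc ∫⁻ t in Ici 2, ENNReal.ofReal (({n ∈ S | (n : ℝ) ≤ t}.ncard : ℝ) / (t ^ 2 * Real.log t))
      = ∑' n : S, ∫⁻ t in Ici (n : ℝ), ENNReal.ofReal (1 / (t ^ 2 * Real.log t))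
          ∂volume.restrict (Ici 2) := by
        simp_rw [(finite_setOf_mem_and_natCast_le S _).ofReal_ncard_div]
        exact lintegral_encard_setOf_mem_and_natCast_le_mul _ S (by fun_prop)
    _ ≤ ∑' n : S, ENNReal.ofReal (1 / ((n : ℝ) * Real.log (n : ℕ))) :=
        ENNReal.tsum_le_tsum fun n => by
          rw [Measure.restrict_restrict measurableSet_Ici]
          exact (lintegral_mono_set inter_subset_left).trans
            (lintegral_Ici_one_div_sq_mul_log_le (by exact_mod_cast hS n n.2))
    _ = ENNReal.ofReal (∑' n : S, 1 / ((n : ℝ) * Real.log (n : ℕ))) :=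
        (ENNReal.ofReal_tsum_of_nonneg (fun n => by
          have := Real.log_natCast_nonneg n
          positivity) hsum).symm
    _ < ⊤ := ENNReal.ofReal_lt_top
end

section
/- Suppose L : [2,∞) → ℝ is positive and increasing, and S is a set of integers greater than 1 whose counting function satisfies S(x) ≥ c·x/(log₂x · log₃x · L(log₂x)) for some c > 0 and all sufficiently large x, where log₂ and log₃ are iterated logarithms. If ∑_{n∈S} 1/(n log n) converges, then ∫_2^∞ dt/(t · log t · L(t)) converges. -/
/-!
Substitute `x = exp (exp t)`: then `dt = dx / (x log x)`, `log₂ x = t` and `log₃ x = log t`, so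
the lower bound on `S(x)` dominates `1 / (t log t L t)` by `c⁻¹ S(x) / (x² log x)` in the
`x`-variable. Writing `S(x) = ∑_{n ∈ S} 1_{n ≤ x}`, the integral of `S(x) / (x² log x)` is
`∑_{n ∈ S} ∫_n^∞ dx / (x² log x) ≤ ∑_{n ∈ S} 1 / (n log n) < ∞`. On the remaining compact range
the integrand is antitone, hence integrable.
-/

open MeasureTheory

noncomputable def log1 (x : ℝ) : ℝ := max 1 (Real.log x)
noncomputable def log2 (x : ℝ) : ℝ := log1 (log1 x)
noncomputable def log3 (x : ℝ) : ℝ := log1 (log2 x)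

open Set Real
open scoped ENNReal

noncomputable def countingFn (S : Set ℕ) (x : ℝ) : ℕ := {n ∈ S | (n : ℝ) ≤ x}.ncard

lemma finite_setOf_mem_and_le (S : Set ℕ) (x : ℝ) : {n ∈ S | (n : ℝ) ≤ x}.Finite :=
  (finite_Iic ⌊x⌋₊).subset fun _ hn => Nat.le_floor hn.2

lemma countingFn_mono (S : Set ℕ) : Monotone (countingFn S) := fun _ y hxy =>
  ncard_le_ncard (fun _ hn => ⟨hn.1, hn.2.trans hxy⟩) (finite_setOf_mem_and_le S y)

lemma tsum_indicator_Ici_natCast (S : Set ℕ) (ψ : ℝ → ℝ≥0∞) (x : ℝ) :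
    ∑' n : S, (Ici (n : ℝ)).indicator ψ x = countingFn S x * ψ x := by
  have hind : S.indicator (fun n : ℕ => (Ici (n : ℝ)).indicator ψ x) =
      {n ∈ S | (n : ℝ) ≤ x}.indicator (fun _ => ψ x) := by
    ext n
    by_cases hn : n ∈ S <;> by_cases hx : (n : ℝ) ≤ x <;> simp [hn, hx, indicator]
  rw [tsum_subtype S (fun n : ℕ => (Ici (n : ℝ)).indicator ψ x), hind, ← tsum_subtype,
    ENNReal.tsum_set_const, ← (finite_setOf_mem_and_le S x).cast_ncard_eq]
  rfl

lemma lintegral_Ici_enorm_one_div_sq_mul_log_le {a : ℝ} (ha : 1 < a) :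
    ∫⁻ x in Ici a, ‖1 / (x ^ 2 * log x)‖ₑ ≤ ENNReal.ofReal (1 / (a * log a)) := by
  have ha0 : 0 < a := by linarith
  have hloga : 0 < log a := log_pos ha
  calc ∫⁻ x in Ici a, ‖1 / (x ^ 2 * log x)‖ₑ
      ≤ ∫⁻ x in Ioi a, ENNReal.ofReal ((log a)⁻¹ * x ^ (-2 : ℝ)) := by
        rw [Measure.restrict_congr_set Ioi_ae_eq_Ici.symm]
        refine setLIntegral_mono' measurableSet_Ioi fun x (hx : a < x) => ?_
        have hx0 : 0 < x := ha0.trans hx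
        have hlog : log a ≤ log x := log_le_log ha0 hx.le
        have : 0 < log x := hloga.trans_le hlog
        rw [Real.enorm_of_nonneg (by positivity), rpow_neg hx0.le, rpow_two, one_div, mul_inv,
          mul_comm]
        gcongr
    _ = ENNReal.ofReal (∫ x in Ioi a, (log a)⁻¹ * x ^ (-2 : ℝ)) :=
        (ofReal_integral_eq_lintegral_ofReal
          ((integrableOn_Ioi_rpow_of_lt (by norm_num) ha0).const_mul _)
          (ae_restrict_of_forall_mem measurableSet_Ioi fun x (hx : a < x) => by
            have := ha0.trans hx
            positivity)).symm
    _ = ENNReal.ofReal (1 / (a * log a)) := by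
        rw [integral_const_mul, integral_Ioi_rpow_of_lt (by norm_num) ha0]
        congr 1
        norm_num [rpow_neg_one]

theorem integrable_countingFn_div_sq_mul_log {S : Set ℕ} (hS : ∀ n ∈ S, 1 < n)
    (hsum : Summable (fun n : S => 1 / ((n : ℝ) * log n))) :
    Integrable (fun x : ℝ => (countingFn S x : ℝ) / (x ^ 2 * log x)) := by
  have hmeas : Measurable fun x : ℝ => (countingFn S x : ℝ) :=
    (Nat.mono_cast.comp (countingFn_mono S)).measurable
  refine ⟨(hmeas.div (by fun_prop)).aestronglyMeasurable, ?_⟩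
  rw [hasFiniteIntegral_iff_enorm]
  calc ∫⁻ x, ‖(countingFn S x : ℝ) / (x ^ 2 * log x)‖ₑ
      = ∫⁻ x, ∑' n : S, (Ici (n : ℝ)).indicator (fun x => ‖1 / (x ^ 2 * log x)‖ₑ) x := by
        congr with x
        rw [tsum_indicator_Ici_natCast, div_eq_mul_one_div, enorm_mul, enorm_natCast]
    _ = ∑' n : S, ∫⁻ x in Ici (n : ℝ), ‖1 / (x ^ 2 * log x)‖ₑ := by
        rw [lintegral_tsum fun n => (by fun_prop : Measurable _).aemeasurable.indicator
          measurableSet_Ici]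
        simp only [lintegral_indicator measurableSet_Ici]
    _ ≤ ∑' n : S, ENNReal.ofReal (1 / ((n : ℝ) * log n)) :=
        ENNReal.tsum_le_tsum fun n =>
          lintegral_Ici_enorm_one_div_sq_mul_log_le (by exact_mod_cast hS n n.2)
    _ = ENNReal.ofReal (∑' n : S, 1 / ((n : ℝ) * log n)) := by
        refine (ENNReal.ofReal_tsum_of_nonneg (fun n => ?_) hsum).symm
        have : (1 : ℝ) < n := by exact_mod_cast hS n n.2
        have := log_pos this
        positivity
    _ < ⊤ := ENNReal.ofReal_lt_top

lemma integrableOn_Ici_exp_exp_iff (g : ℝ → ℝ) (T : ℝ) :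
    IntegrableOn g (Ici (exp (exp T))) ↔
      IntegrableOn (fun t => exp (exp t) * exp t * g (exp (exp t))) (Ici T) := by
  have himage : (fun t => exp (exp t)) '' Ici T = Ici (exp (exp T)) := by
    rw [show (fun t => exp (exp t)) = exp ∘ exp from rfl, image_comp, image_exp_Ici, image_exp_Ici]
  rw [← himage, integrableOn_image_iff_integrableOn_abs_deriv_smul measurableSet_Ici
    (fun t _ => (hasDerivAt_exp t).exp.hasDerivWithinAt)
    (exp_strictMono.comp exp_strictMono).injective.injOn]
  simp only [abs_of_pos (mul_pos (exp_pos _) (exp_pos _)), smul_eq_mul]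

lemma log2_exp_exp {t : ℝ} (ht : 1 ≤ t) : log2 (exp (exp t)) = t := by
  have : 1 ≤ exp t := one_le_exp (by linarith)
  simp [log2, log1, this, ht]

lemma log3_exp_exp {t : ℝ} (ht : exp 1 ≤ t) : log3 (exp (exp t)) = log t := by
  have h1 : 1 ≤ t := le_trans (by linarith [add_one_le_exp (1 : ℝ)]) ht
  rw [log3, log2_exp_exp h1, log1, max_eq_right ((le_log_iff_exp_le (by linarith)).2 ht)]

lemma antitoneOn_one_div_mul_log_mul {L : ℝ → ℝ} {a : ℝ} (ha : 1 < a)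
    (hL : MonotoneOn L (Ici a)) (hpos : ∀ t ∈ Ici a, 0 < L t) :
    AntitoneOn (fun t => 1 / (t * log t * L t)) (Ici a) := by
  intro s (hs : a ≤ s) t (ht : a ≤ t) hst
  have hs0 : 0 < s := by linarith
  have hlogs : 0 < log s := log_pos (ha.trans_le hs)
  have hLs : 0 < L s := hpos s hs
  have hLst : L s ≤ L t := hL hs ht hst
  have hlog : log s ≤ log t := log_le_log hs0 hst
  have ht0 : 0 < t := hs0.trans_le hst
  have hlogt : 0 < log t := hlogs.trans_le hlog
  dsimp only
  gcongr

lemma norm_one_div_mul_log_mul_le_of_le_div {L : ℝ → ℝ} {N c t : ℝ} (hc : 0 < c) (ht : 1 < t)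
    (hL : 0 < L t) (hN : c * exp (exp t) / (t * log t * L t) ≤ N) :
    ‖1 / (t * log t * L t)‖ ≤
      c⁻¹ * (exp (exp t) * exp t * (N / (exp (exp t) ^ 2 * log (exp (exp t))))) := by
  have := log_pos ht
  have hD : 0 < t * log t * L t := by positivity
  rw [norm_of_nonneg (by positivity)]
  rw [log_exp, show exp (exp t) * exp t * (N / (exp (exp t) ^ 2 * exp t)) = N / exp (exp t) by
    field_simp]
  rw [div_le_iff₀ hD] at hN
  field_simp
  linarith

theorem stmt_9 (L : ℝ → ℝ) (hpos : ∀ x, 2 ≤ x → 0 < L x)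
    (hmono : ∀ x y, 2 ≤ x → x ≤ y → L x ≤ L y)
    (S : Set ℕ) (hS : ∀ n ∈ S, 1 < n)
    (c : ℝ) (hc : 0 < c) (x₀ : ℝ)
    (hcount : ∀ x : ℝ, x₀ ≤ x →
      c * x / (log2 x * log3 x * L (log2 x)) ≤ ({n ∈ S | (n : ℝ) ≤ x}.ncard : ℝ))
    (hsum : Summable (fun n : S => 1 / ((n : ℝ) * Real.log (n : ℕ)))) :
    IntegrableOn (fun t : ℝ => 1 / (t * Real.log t * L t)) (Set.Ici 2) := by
  set T := max 3 x₀
  have hT : 3 ≤ T := le_max_left _ _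
  have hanti := antitoneOn_one_div_mul_log_mul one_lt_two
    (fun x hx y _ hxy => hmono x y hx hxy) hpos
  have hhead : IntegrableOn (fun t => 1 / (t * log t * L t)) (Icc 2 T) :=
    (hanti.mono Icc_subset_Ici_self).integrableOn_isCompact isCompact_Icc
  have htail : IntegrableOn (fun t => 1 / (t * log t * L t)) (Ici T) := by
    refine (((integrableOn_Ici_exp_exp_iff _ T).1
      (integrable_countingFn_div_sq_mul_log hS hsum).integrableOn).const_mul c⁻¹).mono'
      (aemeasurable_restrict_of_antitoneOn measurableSet_Ici
        (hanti.mono (Ici_subset_Ici.2 (by linarith)))).aestronglyMeasurable ?_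
    filter_upwards [ae_restrict_mem measurableSet_Ici] with t (ht : T ≤ t)
    have hx₀ : x₀ ≤ exp (exp t) := by
      linarith [le_max_right 3 x₀, add_one_le_exp t, add_one_le_exp (exp t)]
    have he : exp 1 ≤ t := by linarith [exp_one_lt_d9]
    have hcount_t := hcount _ hx₀
    rw [log2_exp_exp (by linarith), log3_exp_exp he] at hcount_t
    exact norm_one_div_mul_log_mul_le_of_le_div hc (by linarith) (hpos t (by linarith)) hcount_t
  exact Icc_union_Ici_eq_Ici (a := (2 : ℝ)) (b := T) (by linarith) ▸ hhead.union htail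
end

section
/- Let A be an infinite set of positive integers containing no primitive subset of size k (where k ≥ 2). Then A(x) ≪ k·log x, i.e., there is an absolute constant C with A(x) ≤ C·k·log x for all x ≥ 2. -/
theorem Primitive.of_lt_two_mul {S : Set ℕ} (hpos : ∀ a ∈ S, 0 < a)
    (hlt : ∀ a ∈ S, ∀ b ∈ S, b < 2 * a) : Primitive S := by
  rintro a ha b hb hab ⟨c, rfl⟩
  have hc : 2 ≤ c := by
    rcases c with _ | _ | c
    · simpa using hpos _ hb
    · simp at hab
    · omega
  have := hlt a ha _ hb
  nlinarith

theorem Nat.lt_two_mul_of_log_two_eq {a b : ℕ} (ha : a ≠ 0) (hab : Nat.log 2 a = Nat.log 2 b) :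
    b < 2 * a :=
  calc b < 2 ^ (Nat.log 2 b + 1) := Nat.lt_pow_succ_log_self one_lt_two b
    _ = 2 * 2 ^ Nat.log 2 a := by rw [hab, pow_succ']
    _ ≤ 2 * a := Nat.mul_le_mul_left 2 (Nat.pow_log_le_self 2 ha)

theorem Primitive.filter_log_two_eq (S : Finset ℕ) (h0 : 0 ∉ S) (i : ℕ) :
    Primitive ↑(S.filter fun n => Nat.log 2 n = i) := by
  refine Primitive.of_lt_two_mul (fun a ha => ?_) (fun a ha b hb => ?_)
  · exact Nat.pos_of_ne_zero fun h => h0 (h ▸ (Finset.mem_filter.1 ha).1)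
  · rw [Finset.mem_coe, Finset.mem_filter] at ha hb
    exact Nat.lt_two_mul_of_log_two_eq (fun h => h0 (h ▸ ha.1)) (ha.2.trans hb.2.symm)

theorem ncard_le_mul_log_two_of_primitive_lt {S : Set ℕ} {k m : ℕ} (h0 : 0 ∉ S)
    (hm : ∀ n ∈ S, n ≤ m) (hprim : ∀ T ⊆ S, Primitive T → T.ncard < k) :
    S.ncard ≤ k * (Nat.log 2 m + 1) := by
  obtain ⟨T, rfl⟩ := ((Set.finite_Iic m).subset hm).exists_finset_coe
  rw [Set.ncard_coe_finset]
  have hfiber : ∀ i ∈ T.image (Nat.log 2), (T.filter fun n => Nat.log 2 n = i).card ≤ k := by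
    intro i _
    have := hprim _ (Finset.coe_subset.2 (Finset.filter_subset _ T)) (Primitive.filter_log_two_eq T (by exact_mod_cast h0) i)
    rw [Set.ncard_coe_finset] at this
    exact this.le
  have hblocks : (T.image (Nat.log 2)).card ≤ Nat.log 2 m + 1 := by
    refine (Finset.card_le_card fun i hi => ?_).trans (Finset.card_range _).le
    obtain ⟨n, hn, rfl⟩ := Finset.mem_image.1 hi
    exact Finset.mem_range_succ_iff.2 (Nat.log_mono_right (hm n hn))
  exact (T.card_le_mul_card_image k hfiber).trans (Nat.mul_le_mul_left k hblocks)

theorem Real.natLog_two_floor_add_one_le {x : ℝ} (hx : 2 ≤ x) :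
    (Nat.log 2 ⌊x⌋₊ + 1 : ℝ) ≤ 2 * Real.logb 2 x := by
  have hfloor : Nat.log 2 ⌊x⌋₊ ≤ Real.logb 2 x :=
    (Real.natLog_le_logb _ _).trans <| by
      exact_mod_cast Real.logb_le_logb_of_le one_lt_two
        (by exact_mod_cast Nat.floor_pos.2 (by linarith)) (Nat.floor_le (by linarith))
  have hone : 1 ≤ Real.logb 2 x := by
    rw [← Real.logb_self_eq_one one_lt_two]
    exact Real.logb_le_logb_of_le one_lt_two two_pos hx
  linarith

theorem stmt_10 :
    ∃ C : ℝ, 0 < C ∧ ∀ (A : Set ℕ) (k : ℕ), 2 ≤ k → A.Infinite → (∀ a ∈ A, 0 < a) →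
      (∀ T ⊆ A, T.Finite → Primitive T → T.ncard < k) →
      ∀ x : ℝ, 2 ≤ x → ({n ∈ A | (n : ℝ) ≤ x}.ncard : ℝ) ≤ C * k * Real.log x := by
  refine ⟨2 / Real.log 2, by positivity, fun A k _ _ hpos hprim x hx => ?_⟩
  have hcount : {n ∈ A | (n : ℝ) ≤ x}.ncard ≤ k * (Nat.log 2 ⌊x⌋₊ + 1) := by
    refine ncard_le_mul_log_two_of_primitive_lt (fun h => (hpos 0 h.1).ne rfl)
      (fun n hn => Nat.le_floor hn.2) fun T hT hTprim => ?_
    have hfin : T.Finite := (Set.finite_Iic ⌊x⌋₊).subset fun n hn => Nat.le_floor (hT hn).2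
    exact hprim T (hT.trans fun n hn => hn.1) hfin hTprim
  calc ({n ∈ A | (n : ℝ) ≤ x}.ncard : ℝ) ≤ k * (Nat.log 2 ⌊x⌋₊ + 1 : ℝ) := by
        exact_mod_cast hcount
    _ ≤ k * (2 * Real.logb 2 x) := by gcongr; exact Real.natLog_two_floor_add_one_le hx
    _ = 2 / Real.log 2 * k * Real.log x := by rw [Real.logb]; ring
end

section
/- Define A_j = {a ∈ ℕ : 2^{2^j} < a ≤ 2^{2^{j+1}}, 2^j ∥ a} (i.e., 2^j exactly divides a) and A = ⋃_{j≥1} A_j. Then ∑_{a ∈ A} 1/a diverges. -/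
/-!
Split `(2 ^ 2 ^ j, 2 ^ 2 ^ (j + 1)]` into the `2 ^ j` dyadic ranges `(2 ^ K, 2 ^ (K + 1)]`. For
`K > j` such a range contains `2 ^ (K - j - 1)` numbers `a` with `2 ^ j ∥ a`, each with
`1 / a ≥ 2 ^ (-(K + 1))`, so it contributes at least `2 ^ (-(j + 2))`, and `A_j` contributes at
least `1 / 4`. The ranges of different `j` are disjoint, so the partial sums exceed `n / 4`.
-/

def bigA : Set ℕ :=
  {a : ℕ | ∃ j : ℕ, 1 ≤ j ∧ 2 ^ 2 ^ j < a ∧ a ≤ 2 ^ 2 ^ (j + 1) ∧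
    2 ^ j ∣ a ∧ ¬ 2 ^ (j + 1) ∣ a}

open Finset

theorem Finset.sum_Ioc_eq_sum_Ico_sum_Ioc {M : Type*} [AddCommMonoid M] {u : ℕ → ℕ}
    (hu : Monotone u) (f : ℕ → M) {P Q : ℕ} (hPQ : P ≤ Q) :
    ∑ a ∈ Ioc (u P) (u Q), f a = ∑ K ∈ Ico P Q, ∑ a ∈ Ioc (u K) (u (K + 1)), f a := by
  induction Q, hPQ using Nat.le_induction with
  | base => simp
  | succ Q hPQ ih =>
    rw [sum_Ico_succ_top hPQ, ← ih, sum_Ioc_consecutive _ (hu hPQ) (hu Q.le_succ)]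

def exactPowTwoMultiples (j : ℕ) : Set ℕ := {a | 2 ^ j ∣ a ∧ ¬ 2 ^ (j + 1) ∣ a}

theorem two_pow_mul_odd_mem_exactPowTwoMultiples (j m : ℕ) :
    2 ^ j * (2 * m + 1) ∈ exactPowTwoMultiples j := by
  refine ⟨dvd_mul_right _ _, fun h => ?_⟩
  rw [pow_succ, Nat.mul_dvd_mul_iff_left (by positivity)] at h
  omega

theorem inv_two_pow_le_sum_Ioc_two_pow {j K : ℕ} (hjK : j < K) :
    1 / 2 ^ (j + 2) ≤ ∑ a ∈ Ioc (2 ^ K) (2 ^ (K + 1)),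
      (exactPowTwoMultiples j).indicator (fun a : ℕ => (1 : ℝ) / a) a := by
  obtain ⟨d, rfl⟩ := Nat.exists_eq_add_of_lt hjK
  set ms := Ico (2 ^ d) (2 ^ (d + 1))
  set e : ℕ → ℕ := fun m => 2 ^ j * (2 * m + 1)
  have he_mem : ∀ m ∈ ms, e m ∈ Ioc (2 ^ (j + d + 1)) (2 ^ (j + d + 1 + 1)) := by
    intro m hm
    rw [mem_Ico, pow_succ] at hm
    rw [mem_Ioc, show 2 ^ (j + d + 1) = 2 ^ j * (2 * 2 ^ d) by ring,
      show 2 ^ (j + d + 1 + 1) = 2 ^ j * (4 * 2 ^ d) by ring]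
    exact ⟨Nat.mul_lt_mul_of_pos_left (by omega) (by positivity),
      Nat.mul_le_mul_left _ (by omega)⟩
  have he_inj : Set.InjOn e ms := fun m _ n _ h => by
    have := Nat.eq_of_mul_eq_mul_left (by positivity) h
    omega
  have hcard : #ms = 2 ^ d := by
    rw [Nat.card_Ico, pow_succ]
    omega
  calc (1 : ℝ) / 2 ^ (j + 2) = #ms • ((1 : ℝ) / 2 ^ (j + d + 1 + 1)) := by
        rw [hcard, nsmul_eq_mul]
        push_cast
        field_simp
        ring
    _ ≤ ∑ m ∈ ms, (1 : ℝ) / e m := by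
        refine card_nsmul_le_sum _ _ _ fun m hm => ?_
        gcongr
        exact_mod_cast (mem_Ioc.1 (he_mem m hm)).2
    _ = ∑ a ∈ ms.image e,
          (exactPowTwoMultiples j).indicator (fun a : ℕ => (1 : ℝ) / a) a := by
        rw [sum_image he_inj]
        exact sum_congr rfl fun m _ =>
          (Set.indicator_of_mem (two_pow_mul_odd_mem_exactPowTwoMultiples j m)
            (fun a : ℕ => (1 : ℝ) / a)).symm
    _ ≤ _ :=
        sum_le_sum_of_subset_of_nonneg (image_subset_iff.2 he_mem) fun a _ _ =>
          Set.indicator_nonneg (fun _ _ => by positivity) a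

theorem quarter_le_sum_Ioc_two_pow_two_pow (j : ℕ) :
    1 / 4 ≤ ∑ a ∈ Ioc (2 ^ 2 ^ j) (2 ^ 2 ^ (j + 1)),
      (exactPowTwoMultiples j).indicator (fun a : ℕ => (1 : ℝ) / a) a := by
  rw [sum_Ioc_eq_sum_Ico_sum_Ioc (pow_right_mono₀ one_le_two) _
    (pow_le_pow_right₀ one_le_two j.le_succ)]
  calc (1 : ℝ) / 4 = #(Ico (2 ^ j) (2 ^ (j + 1))) • ((1 : ℝ) / 2 ^ (j + 2)) := by
        rw [Nat.card_Ico, pow_succ, show 2 ^ j * 2 - 2 ^ j = 2 ^ j by omega, nsmul_eq_mul]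
        push_cast
        field_simp
        ring
    _ ≤ _ := card_nsmul_le_sum _ _ _ fun K hK =>
        inv_two_pow_le_sum_Ioc_two_pow (j.lt_two_pow_self.trans_le (mem_Ico.1 hK).1)

theorem exactPowTwoMultiples_indicator_le_bigA_indicator {j a : ℕ} (hj : 1 ≤ j)
    (ha : a ∈ Ioc (2 ^ 2 ^ j) (2 ^ 2 ^ (j + 1))) :
    (exactPowTwoMultiples j).indicator (fun a : ℕ => (1 : ℝ) / a) a ≤
      bigA.indicator (fun a : ℕ => (1 : ℝ) / a) a := by
  refine Set.indicator_apply_le' (fun haj => ?_) fun _ =>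
    Set.indicator_nonneg (fun _ _ => by positivity) a
  rw [mem_Ioc] at ha
  exact (Set.indicator_of_mem (show a ∈ bigA from ⟨j, hj, ha.1, ha.2, haj⟩)
    (fun a : ℕ => (1 : ℝ) / a)).ge

theorem le_sum_Ioc_bigA_indicator (n : ℕ) :
    n / 4 ≤ ∑ a ∈ Ioc (2 ^ 2 ^ 1) (2 ^ 2 ^ (n + 1)),
      bigA.indicator (fun a : ℕ => (1 : ℝ) / a) a := by
  rw [sum_Ioc_eq_sum_Ico_sum_Ioc (u := fun j => 2 ^ 2 ^ j)
    (fun _ _ h => pow_le_pow_right₀ one_le_two (pow_le_pow_right₀ one_le_two h)) _ n.succ_pos]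
  calc (n : ℝ) / 4 = #(Ico 1 (n + 1)) • ((1 : ℝ) / 4) := by
        rw [Nat.card_Ico, nsmul_eq_mul]
        push_cast
        ring
    _ ≤ _ := card_nsmul_le_sum _ _ _ fun j hj =>
        (quarter_le_sum_Ioc_two_pow_two_pow j).trans <| sum_le_sum fun a ha =>
          exactPowTwoMultiples_indicator_le_bigA_indicator (mem_Ico.1 hj).1 ha

theorem stmt_14 : ¬ Summable (fun a : bigA => (1 : ℝ) / (a : ℕ)) := by
  intro h
  have hsum := (summable_subtype_iff_indicator (f := fun a : ℕ => (1 : ℝ) / a)).mp h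
  obtain ⟨n, hn⟩ := exists_nat_gt (4 * ∑' a, bigA.indicator (fun a : ℕ => (1 : ℝ) / a) a)
  have := (le_sum_Ioc_bigA_indicator n).trans <|
    hsum.sum_le_tsum _ fun a _ => Set.indicator_nonneg (fun _ _ => by positivity) a
  linarith
end

section
/- Define A_j = {a ∈ ℕ : 2^{2^j} < a ≤ 2^{2^{j+1}}, 2^j ∥ a} and A = ⋃_{j≥1} A_j. Then ∑_{a ∈ A, a > 1} 1/(a·log a) converges. -/
/-! Write `a ∈ A_j` as `a = 2^j m` with `1 ≤ m ≤ 2^{2^{j+1}}`. Since `log a > 2^j log 2`, the term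
`1/(a log a)` is at most `(4^j log 2)⁻¹ m⁻¹`, and `a ↦ (j, m)` is injective. Summing over `m` gives
`(4^j log 2)⁻¹ H(2^{2^{j+1}}) ≤ (4^j log 2)⁻¹ (1 + 2^{j+1} log 2) ≤ (4 / log 2) 2^{-j}`, which is summable in `j`. -/

open Real Finset

lemma pow_mul_log_two_lt_log {j a : ℕ} (h : 2 ^ 2 ^ j < a) :
    (2 : ℝ) ^ j * log 2 < log a := by
  have : log ((2 : ℝ) ^ 2 ^ j) < log a := log_lt_log (by positivity) (by exact_mod_cast h)
  simpa [Real.log_pow] using this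

lemma one_div_mul_log_le {j m : ℕ} (h : 2 ^ 2 ^ j < 2 ^ j * m) :
    1 / ((2 ^ j * m : ℕ) * log (2 ^ j * m : ℕ)) ≤ (4 ^ j * log 2)⁻¹ * (m : ℝ)⁻¹ := by
  have hm : 0 < m := Nat.pos_of_ne_zero (by rintro rfl; simp at h)
  have hlog := pow_mul_log_two_lt_log h
  push_cast at hlog ⊢
  rw [one_div, ← mul_inv, show (4 : ℝ) ^ j = 2 ^ j * 2 ^ j by rw [← mul_pow]; norm_num]
  apply inv_anti₀ (by positivity)
  calc (2 : ℝ) ^ j * 2 ^ j * log 2 * m = 2 ^ j * m * (2 ^ j * log 2) := by ring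
    _ ≤ 2 ^ j * m * log (2 ^ j * m) := by gcongr

lemma sum_Icc_inv_le_two_pow (j : ℕ) :
    ∑ m ∈ Icc (1 : ℕ) (2 ^ 2 ^ (j + 1)), (m : ℝ)⁻¹ ≤ 2 ^ (j + 2) :=
  calc ∑ m ∈ Icc (1 : ℕ) (2 ^ 2 ^ (j + 1)), (m : ℝ)⁻¹ = harmonic (2 ^ 2 ^ (j + 1)) := by
        simp [harmonic_eq_sum_Icc]
    _ ≤ 1 + log (2 ^ 2 ^ (j + 1) : ℕ) := harmonic_le_one_add_log _
    _ = 1 + 2 ^ (j + 1) * log 2 := by push_cast; rw [Real.log_pow]; push_cast; rfl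
    _ ≤ 2 ^ (j + 1) + 2 ^ (j + 1) * 1 := by
        gcongr
        · exact one_le_pow₀ one_le_two
        · linarith [log_two_lt_d9]
    _ = 2 ^ (j + 2) := by ring

lemma summable_sigma_Icc_inv_four_pow_mul_inv :
    Summable fun x : Σ j : ℕ, Icc 1 (2 ^ 2 ^ (j + 1)) =>
      (4 ^ x.1 * log 2)⁻¹ * ((x.2 : ℕ) : ℝ)⁻¹ := by
  have hlog : 0 < log 2 := log_pos one_lt_two
  refine (summable_sigma_of_nonneg fun x => by positivity).2 ⟨fun j => Summable.of_finite, ?_⟩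
  refine (summable_geometric_two.mul_left (4 / log 2)).of_nonneg_of_le
    (fun j => tsum_nonneg fun _ => by positivity) (fun j => ?_)
  rw [Finset.tsum_subtype (Icc 1 (2 ^ 2 ^ (j + 1))) fun m : ℕ => (4 ^ j * log 2)⁻¹ * (m : ℝ)⁻¹,
    ← Finset.mul_sum]
  calc (4 ^ j * log 2)⁻¹ * ∑ m ∈ Icc (1 : ℕ) (2 ^ 2 ^ (j + 1)), (m : ℝ)⁻¹
      ≤ (4 ^ j * log 2)⁻¹ * 2 ^ (j + 2) := by gcongr; exact sum_Icc_inv_le_two_pow j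
    _ = 4 / log 2 * (1 / 2) ^ j := by
        rw [show (4 : ℝ) ^ j = 2 ^ j * 2 ^ j by rw [← mul_pow]; norm_num, one_div_pow]
        field_simp
        ring

lemma div_two_pow_mem_Icc {j a : ℕ} (hlt : 2 ^ 2 ^ j < a) (hle : a ≤ 2 ^ 2 ^ (j + 1))
    (hdvd : 2 ^ j ∣ a) : a / 2 ^ j ∈ Icc 1 (2 ^ 2 ^ (j + 1)) := by
  refine mem_Icc.2 ⟨Nat.div_pos (Nat.le_of_dvd (Nat.zero_lt_of_lt hlt) hdvd) (by positivity), ?_⟩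
  exact (Nat.div_le_self _ _).trans hle

theorem stmt_15 :
    Summable (fun a : {a : ℕ | a ∈ bigA ∧ 1 < a} =>
      (1 : ℝ) / ((a : ℕ) * Real.log (a : ℕ))) := by
  have hblock : ∀ a : {a : ℕ | a ∈ bigA ∧ 1 < a},
      ∃ j, 2 ^ 2 ^ j < (a : ℕ) ∧ (a : ℕ) ≤ 2 ^ 2 ^ (j + 1) ∧ 2 ^ j ∣ (a : ℕ) := by
    rintro ⟨a, ⟨j, -, hlt, hle, hdvd, -⟩, -⟩
    exact ⟨j, hlt, hle, hdvd⟩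
  choose j hlt hle hdvd using hblock
  let φ (a : {a : ℕ | a ∈ bigA ∧ 1 < a}) : Σ j : ℕ, Icc 1 (2 ^ 2 ^ (j + 1)) :=
    ⟨j a, a / 2 ^ j a, div_two_pow_mem_Icc (hlt a) (hle a) (hdvd a)⟩
  have hφ : ∀ a, 2 ^ (φ a).1 * ((φ a).2 : ℕ) = a := fun a => Nat.mul_div_cancel' (hdvd a)
  have hinj : Function.Injective φ :=
    .of_comp (f := fun x => 2 ^ x.1 * (x.2 : ℕ)) fun a b hab => Subtype.ext <| by
      simpa only [Function.comp_apply, hφ] using hab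
  refine (summable_sigma_Icc_inv_four_pow_mul_inv.comp_injective hinj).of_nonneg_of_le
    (fun a => by positivity) fun a => ?_
  have := one_div_mul_log_le (m := (φ a).2) ((hφ a).symm ▸ hlt a)
  rwa [hφ a] at this
end

section
/- Let A_j = {a ∈ ℕ : 2^{2^j} < a ≤ 2^{2^{j+1}}, 2^j ∥ a}, A = ⋃_{j≥1} A_j, and let S ⊆ A be primitive. For s ∈ ℕ let s° denote the largest odd divisor of s. If s_1, s_2 ∈ S are distinct, then s_1° does not divide s_2°. -/
/-- The largest odd divisor of `s`. -/
def oddPart (s : ℕ) : ℕ := s / 2 ^ (s.factorization 2)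


/-! Write `s = 2 ^ j * s°` with `s ∈ A_j`. If `s₁° ∣ s₂°` and `j₁ ≤ j₂` then `s₁ ∣ s₂`. Otherwise
`j₂ < j₁`, and the size constraints `s₂ ≤ 2 ^ 2 ^ (j₂ + 1) ≤ 2 ^ 2 ^ j₁ < s₁` force `s₂° < 2 s₁°`,
so `s₁° = s₂°` and `s₂ ∣ s₁`. Either way primitivity is violated. -/

lemma two_pow_mul_oddPart {s j : ℕ} (hdvd : 2 ^ j ∣ s) (hndvd : ¬ 2 ^ (j + 1) ∣ s) :
    2 ^ j * oddPart s = s := by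
  have hs : s ≠ 0 := by
    rintro rfl
    exact hndvd (dvd_zero _)
  have hj : s.factorization 2 = j := by
    rw [← Nat.multiplicity_eq_factorization Nat.prime_two hs]
    exact multiplicity_eq_of_dvd_of_not_dvd hdvd hndvd
  rw [oddPart, ← hj]
  exact Nat.ordProj_mul_ordCompl_eq_self s 2

lemma exists_two_pow_mul_oddPart_of_mem_bigA {a : ℕ} (ha : a ∈ bigA) :
    ∃ j, 2 ^ 2 ^ j < a ∧ a ≤ 2 ^ 2 ^ (j + 1) ∧ 2 ^ j * oddPart a = a := by
  obtain ⟨j, -, hlo, hhi, hdvd, hndvd⟩ := ha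
  exact ⟨j, hlo, hhi, two_pow_mul_oddPart hdvd hndvd⟩

lemma two_pow_add_le_two_pow_add {a b : ℕ} (h : a ≤ b) : 2 ^ a + b ≤ 2 ^ b + a := by
  induction b, h using Nat.le_induction with
  | base => rfl
  | succ n _ ih =>
    have : 1 ≤ 2 ^ n := Nat.one_le_two_pow
    rw [pow_succ]
    omega

lemma lt_two_mul_of_two_pow_mul_bounds {j₁ j₂ q₁ q₂ : ℕ} (hj : j₂ < j₁)
    (h₁ : 2 ^ 2 ^ j₁ < 2 ^ j₁ * q₁) (h₂ : 2 ^ j₂ * q₂ ≤ 2 ^ 2 ^ (j₂ + 1)) :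
    q₂ < 2 * q₁ := by
  have : 2 ^ (j₂ + j₁) * q₂ < 2 ^ (j₂ + j₁) * (2 * q₁) := calc
    2 ^ (j₂ + j₁) * q₂ = 2 ^ j₁ * (2 ^ j₂ * q₂) := by ring
    _ ≤ 2 ^ j₁ * 2 ^ 2 ^ (j₂ + 1) := Nat.mul_le_mul_left _ h₂
    _ = 2 ^ (2 ^ (j₂ + 1) + j₁) := by ring
    _ ≤ 2 ^ (2 ^ j₁ + (j₂ + 1)) :=
      Nat.pow_le_pow_right two_pos (two_pow_add_le_two_pow_add hj)
    _ = 2 ^ (j₂ + 1) * 2 ^ 2 ^ j₁ := by ring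
    _ < 2 ^ (j₂ + 1) * (2 ^ j₁ * q₁) := Nat.mul_lt_mul_of_pos_left h₁ (by positivity)
    _ = 2 ^ (j₂ + j₁) * (2 * q₁) := by ring
  exact Nat.lt_of_mul_lt_mul_left this

theorem stmt_16 (S : Set ℕ) (hSA : S ⊆ bigA) (hprim : Primitive S)
    (s₁ s₂ : ℕ) (hs₁ : s₁ ∈ S) (hs₂ : s₂ ∈ S) (hne : s₁ ≠ s₂) :
    ¬ oddPart s₁ ∣ oddPart s₂ := by
  intro hdvd
  obtain ⟨j₁, hlo₁, -, hs₁_eq⟩ := exists_two_pow_mul_oddPart_of_mem_bigA (hSA hs₁)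
  obtain ⟨j₂, hlo₂, hhi₂, hs₂_eq⟩ := exists_two_pow_mul_oddPart_of_mem_bigA (hSA hs₂)
  rcases le_or_gt j₁ j₂ with hj | hj
  · refine hprim s₁ hs₁ s₂ hs₂ hne ?_
    rw [← hs₁_eq, ← hs₂_eq]
    exact mul_dvd_mul (pow_dvd_pow 2 hj) hdvd
  · have hq₂ : oddPart s₂ ≠ 0 := by
      intro h
      rw [h, mul_zero] at hs₂_eq
      subst hs₂_eq
      exact Nat.not_lt_zero _ hlo₂
    have hq : oddPart s₂ = oddPart s₁ := Nat.eq_of_dvd_of_lt_two_mul hq₂ hdvd <|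
      lt_two_mul_of_two_pow_mul_bounds hj (by rwa [hs₁_eq]) (by rwa [hs₂_eq])
    refine hprim s₂ hs₂ s₁ hs₁ hne.symm ?_
    rw [← hs₁_eq, ← hs₂_eq, hq]
    exact mul_dvd_mul_right (pow_dvd_pow 2 hj.le) _
end

section
/- Assume the Erdős bound: there is a constant C₀ such that ∑_{n ∈ T, n>1} 1/(n·log n) ≤ C₀ for every primitive set T. Then, with A = ⋃_{j≥1} {a : 2^{2^j} < a ≤ 2^{2^{j+1}}, 2^j ∥ a}, every primitive subset S ⊆ A satisfies ∑_{s ∈ S} 1/s < ∞. -/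
/-!
Write `a = 2 ^ j * o` with `o` odd. On `bigA` the exponent `j` is determined by the dyadic block
`(2 ^ 2 ^ j, 2 ^ 2 ^ (j + 1)]` containing `a`, and the blocks are so far apart that an odd part
from a higher block exceeds half of every odd part from a lower one. Hence if `o s ∣ o t` then
either `j s ≤ j t` and `s ∣ t`, or `o s = o t` and `t ∣ s`; so `s ↦ o s` is injective on a primitive
`S ⊆ bigA` with primitive image. Finally `log o ≤ log a ≤ 2 ^ (j + 1) log 2`, so
`o log o ≤ 2 log 2 · a`, and `∑ 1 / s` is dominated by the Erdős sum of the odd parts.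
-/

lemma Primitive.eq_of_dvd_or_dvd {S : Set ℕ} (hS : Primitive S) {a b : ℕ} (ha : a ∈ S)
    (hb : b ∈ S) (h : a ∣ b ∨ b ∣ a) : a = b := by
  by_contra hab
  rcases h with h | h
  · exact hS a ha b hb hab h
  · exact hS b hb a ha (Ne.symm hab) h

lemma two_pow_add_le_two_pow_add_s19 {k n : ℕ} (hkn : k ≤ n) : 2 ^ k + n ≤ 2 ^ n + k := by
  induction n, hkn using Nat.le_induction with
  | base => rfl
  | succ n _ ih => have := Nat.one_le_two_pow (n := n); rw [pow_succ]; omega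

lemma lt_two_mul_of_two_pow_bounds {j k m n : ℕ} (hjk : j < k)
    (hm : 2 ^ 2 ^ k < 2 ^ k * m) (hn : 2 ^ j * n ≤ 2 ^ 2 ^ (j + 1)) : n < 2 * m := by
  have hexp := two_pow_add_le_two_pow_add_s19 (Nat.succ_le_of_lt hjk)
  have : 2 ^ j * 2 ^ k * n < 2 ^ j * 2 ^ k * (2 * m) :=
    calc 2 ^ j * 2 ^ k * n = 2 ^ k * (2 ^ j * n) := by ring
      _ ≤ 2 ^ k * 2 ^ 2 ^ (j + 1) := Nat.mul_le_mul_left _ hn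
      _ = 2 ^ (2 ^ (j + 1) + k) := by rw [mul_comm, ← pow_add]
      _ ≤ 2 ^ (2 ^ k + (j + 1)) := Nat.pow_le_pow_right two_pos hexp
      _ = 2 ^ j * 2 * 2 ^ 2 ^ k := by ring
      _ < 2 ^ j * 2 * (2 ^ k * m) := Nat.mul_lt_mul_of_pos_left hm (by positivity)
      _ = 2 ^ j * 2 ^ k * (2 * m) := by ring
  exact (Nat.mul_lt_mul_left (by positivity)).mp this

lemma one_div_le_of_two_pow_mul_le {j o : ℕ} (ho : 2 ≤ o) (h : 2 ^ j * o ≤ 2 ^ 2 ^ (j + 1)) :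
    (1 : ℝ) / (2 ^ j * o : ℕ) ≤ 2 * Real.log 2 * (1 / (o * Real.log o)) := by
  have ho' : (2 : ℝ) ≤ o := by exact_mod_cast ho
  have hlog_pos : 0 < Real.log o := Real.log_pos (by linarith)
  have hlog : Real.log o ≤ 2 ^ (j + 1) * Real.log 2 := by
    have : (o : ℝ) ≤ 2 ^ 2 ^ (j + 1) := by
      exact_mod_cast (Nat.le_mul_of_pos_left o (by positivity)).trans h
    calc Real.log o ≤ Real.log (2 ^ 2 ^ (j + 1)) := Real.log_le_log (by linarith) this
      _ = 2 ^ (j + 1) * Real.log 2 := by rw [Real.log_pow]; push_cast; ring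
  rw [mul_one_div, div_le_div_iff₀ (by positivity) (by positivity)]
  have := mul_le_mul_of_nonneg_left hlog (by positivity : (0 : ℝ) ≤ o)
  push_cast
  rw [pow_succ] at this
  linarith

section bigA

variable {a s t : ℕ}

lemma mem_bigA_bounds (ha : a ∈ bigA) :
    2 ^ 2 ^ a.factorization 2 < 2 ^ a.factorization 2 * ordCompl[2] a ∧
      2 ^ a.factorization 2 * ordCompl[2] a ≤ 2 ^ 2 ^ (a.factorization 2 + 1) := by
  rw [Nat.ordProj_mul_ordCompl_eq_self]
  obtain ⟨j, -, hlow, hupp, hdvd, hndvd⟩ := ha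
  have ha0 : a ≠ 0 := Nat.ne_zero_of_lt hlow
  have hj : a.factorization 2 = j := by
    have := (Nat.prime_two.pow_dvd_iff_le_factorization ha0).mp hdvd
    have := mt (Nat.prime_two.pow_dvd_iff_le_factorization ha0).mpr hndvd
    omega
  exact hj ▸ ⟨hlow, hupp⟩

lemma two_lt_ordCompl_of_mem_bigA (ha : a ∈ bigA) : 2 < ordCompl[2] a := by
  have : 2 ^ a.factorization 2 * 2 < 2 ^ a.factorization 2 * ordCompl[2] a :=
    calc 2 ^ a.factorization 2 * 2 = 2 ^ (a.factorization 2 + 1) := (pow_succ _ _).symm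
      _ ≤ 2 ^ 2 ^ a.factorization 2 := Nat.pow_le_pow_right two_pos Nat.lt_two_pow_self
      _ < 2 ^ a.factorization 2 * ordCompl[2] a := (mem_bigA_bounds ha).1
  exact (Nat.mul_lt_mul_left (by positivity)).mp this

lemma dvd_or_dvd_of_ordCompl_dvd (hs : s ∈ bigA) (ht : t ∈ bigA)
    (hdvd : ordCompl[2] s ∣ ordCompl[2] t) : s ∣ t ∨ t ∣ s := by
  rw [← Nat.ordProj_mul_ordCompl_eq_self s 2, ← Nat.ordProj_mul_ordCompl_eq_self t 2]
  rcases le_or_gt (s.factorization 2) (t.factorization 2) with hle | hlt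
  · exact .inl (mul_dvd_mul (pow_dvd_pow 2 hle) hdvd)
  · have hot : ordCompl[2] t ≠ 0 := by have := two_lt_ordCompl_of_mem_bigA ht; omega
    have heq : ordCompl[2] t = ordCompl[2] s := Nat.eq_of_dvd_of_lt_two_mul hot hdvd
      (lt_two_mul_of_two_pow_bounds hlt (mem_bigA_bounds hs).1 (mem_bigA_bounds ht).2)
    exact .inr (heq ▸ mul_dvd_mul_right (pow_dvd_pow 2 hlt.le) _)

-- Without the ascription `: ℕ` the division hidden in `ordCompl[2] a` would be taken in `ℝ`.
lemma one_div_le_of_mem_bigA (ha : a ∈ bigA) :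
    (1 : ℝ) / a ≤
      2 * Real.log 2 * (1 / ((ordCompl[2] a : ℕ) * Real.log (ordCompl[2] a : ℕ))) := by
  have := one_div_le_of_two_pow_mul_le (two_lt_ordCompl_of_mem_bigA ha).le (mem_bigA_bounds ha).2
  rwa [Nat.ordProj_mul_ordCompl_eq_self] at this

end bigA

lemma Primitive.injOn_ordCompl_two {S : Set ℕ} (hSA : S ⊆ bigA) (hS : Primitive S) :
    S.InjOn (fun n => ordCompl[2] n) := fun _ hs _ ht h =>
  hS.eq_of_dvd_or_dvd hs ht (dvd_or_dvd_of_ordCompl_dvd (hSA hs) (hSA ht) (dvd_of_eq h))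

lemma Primitive.image_ordCompl_two {S : Set ℕ} (hSA : S ⊆ bigA) (hS : Primitive S) :
    Primitive ((fun n => ordCompl[2] n) '' S) := by
  rintro _ ⟨s, hs, rfl⟩ _ ⟨t, ht, rfl⟩ hne hdvd
  exact hne (congrArg (fun n => ordCompl[2] n) <|
    hS.eq_of_dvd_or_dvd hs ht (dvd_or_dvd_of_ordCompl_dvd (hSA hs) (hSA ht) hdvd))

theorem stmt_19 (C₀ : ℝ)
    (herdos : ∀ T : Set ℕ, (∀ t ∈ T, 0 < t) → Primitive T →
      Summable (fun n : {n : ℕ | n ∈ T ∧ 1 < n} => (1 : ℝ) / ((n : ℕ) * Real.log (n : ℕ))) ∧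
      (∑' n : {n : ℕ | n ∈ T ∧ 1 < n}, (1 : ℝ) / ((n : ℕ) * Real.log (n : ℕ))) ≤ C₀)
    (S : Set ℕ) (hSA : S ⊆ bigA) (hprim : Primitive S) :
    Summable (fun s : S => (1 : ℝ) / (s : ℕ)) := by
  set T := (fun n => ordCompl[2] n) '' S
  have hT : ∀ s ∈ S, 1 < ordCompl[2] s := fun s hs =>
    one_lt_two.trans (two_lt_ordCompl_of_mem_bigA (hSA hs))
  obtain ⟨hsum, -⟩ := herdos T (by rintro _ ⟨s, hs, rfl⟩; exact (hT s hs).pos)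
    (hprim.image_ordCompl_two hSA)
  let f : S → {n : ℕ | n ∈ T ∧ 1 < n} := fun s => ⟨ordCompl[2] s, ⟨s, s.2, rfl⟩, hT s s.2⟩
  have hf : f.Injective := fun s t h =>
    Subtype.ext (hprim.injOn_ordCompl_two hSA s.2 t.2 (congrArg Subtype.val h))
  exact .of_nonneg_of_le (fun _ => by positivity) (fun s => one_div_le_of_mem_bigA (hSA s.2))
    ((hsum.comp_injective hf).mul_left (2 * Real.log 2))
end
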